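/- arXiv:2412.18392 — 2 statements merged into one kernel-verified Lean document; each statement's English description precedes it below -/
import Mathlib

section
/- Let (X,d,μ) be an RD-space with parameters κ≤n and μ(X)=∞, and let K be a strongly singular generalized kernel on X with parameters (m,ε,α,p₀). Then there exists C>0 such that for all z,u₀∈X with 0<d(z,u₀)<1, every x∈X with d(x,u₀) ≤ 2d(z,u₀)^α, and all f₁,…,f_m∈L^{p₀'}_{loc}(X), ∫_{{ȳ∈X^m : ρ(ȳ,ū₀) ≥ 2d(z,u₀)^α}} |K(z,y₁,…,y_m) − K(u₀,y₁,…,y_m)| ∏_{j=1}^m |f_j(y_j)| dμ(y₁)⋯dμ(y_m) ≤ C·𝓜_{p₀'}(f⃗)(x), where ū₀=(u₀,…,u₀) and ρ(ȳ,ū₀)=max_{1≤j≤m} d(y_j,u₀). -/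
/-!
Split `{ρ(ȳ, ū₀) ≥ 2 d^α}` (with `d = d(z, u₀)`) into the dyadic annuli
`2^k d^α ≤ ρ ≤ 2^(k+1) d^α`, `k ≥ 1`. On the `k`-th annulus Hölder's inequality with exponents
`p₀, p₀'` bounds the integral by the `L^{p₀}` norm of `K(z,·) - K(u₀,·)` there, which the kernel
condition controls, times `(∏ⱼ ∫_B |fⱼ|^{p₀'})^{1/p₀'} ≤ μ(B)^{m/p₀'} 𝓜_{p₀'}(f⃗)(x)` for the ball
`B = B(u₀, 2^(k+2) d^α) ∋ x`. Doubling, reverse doubling and the uniform bound on unit balls give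
`μ(B) ≲ 2^{kn} d^{ακ}`, so the powers of `d` cancel and the `k`-th annulus contributes
`≲ 2^{-kε/α} 𝓜_{p₀'}(f⃗)(x)`: a geometric series.
-/

open MeasureTheory Metric ENNReal Set Bornology
open scoped BigOperators NNReal ENNReal

noncomputable section

section Defs

variable {X : Type*} [MetricSpace X] [MeasurableSpace X] [BorelSpace X]

/-- Weighted `L^p` norm `(∫ |f|^p w dμ)^{1/p}` of a real-valued function. -/
def lpNormW (μ : Measure X) (p : ℝ) (w : X → ℝ) (f : X → ℝ) : ℝ≥0∞ :=
  (∫⁻ x, ENNReal.ofReal (|f x| ^ p * w x) ∂μ) ^ (1 / p)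

/-- Weighted `L^p` norm of an `ℝ≥0∞`-valued function. -/
def lpNormW' (μ : Measure X) (p : ℝ) (w : X → ℝ) (g : X → ℝ≥0∞) : ℝ≥0∞ :=
  (∫⁻ x, g x ^ p * ENNReal.ofReal (w x) ∂μ) ^ (1 / p)

/-- Weighted weak `L^p` (Lorentz `L^{p,∞}`) norm of a real-valued function. -/
def weakLpNormW (μ : Measure X) (p : ℝ) (w : X → ℝ) (f : X → ℝ) : ℝ≥0∞ :=
  ⨆ (t : ℝ) (_ : 0 < t),
    ENNReal.ofReal t * (∫⁻ x in {y | t < |f y|}, ENNReal.ofReal (w x) ∂μ) ^ (1 / p)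

/-- Weighted weak `L^p` norm of an `ℝ≥0∞`-valued function. -/
def weakLpNormW' (μ : Measure X) (p : ℝ) (w : X → ℝ) (g : X → ℝ≥0∞) : ℝ≥0∞ :=
  ⨆ (t : ℝ) (_ : 0 < t),
    ENNReal.ofReal t * (∫⁻ x in {y | ENNReal.ofReal t < g y}, ENNReal.ofReal (w x) ∂μ) ^ (1 / p)

/-- The BMO seminorm `sup_B μ(B)⁻¹ ∫_B |f - f_B| dμ` (supremum over balls). -/
def bmoNorm (μ : Measure X) (f : X → ℝ) : ℝ≥0∞ :=
  ⨆ (c : X) (r : ℝ) (_ : 0 < r),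
    (μ (ball c r))⁻¹ *
      ∫⁻ y in ball c r, ENNReal.ofReal |f y - ⨍ z in ball c r, f z ∂μ| ∂μ

/-- Membership in `BMO(X)`. -/
def MemBMO (μ : Measure X) (f : X → ℝ) : Prop :=
  LocallyIntegrable f μ ∧ bmoNorm μ f < ⊤

/-- The Hardy–Littlewood maximal function. -/
def hlMaximal (μ : Measure X) (f : X → ℝ) (x : X) : ℝ≥0∞ :=
  ⨆ (c : X) (r : ℝ) (_ : 0 < r) (_ : x ∈ ball c r),
    (μ (ball c r))⁻¹ * ∫⁻ y in ball c r, ENNReal.ofReal |f y| ∂μ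

/-- The sharp maximal function `M^♯ f`. -/
def sharpMaximal (μ : Measure X) (f : X → ℝ) (x : X) : ℝ≥0∞ :=
  ⨆ (c : X) (r : ℝ) (_ : 0 < r) (_ : x ∈ ball c r),
    (μ (ball c r))⁻¹ *
      ∫⁻ y in ball c r, ENNReal.ofReal |f y - ⨍ z in ball c r, f z ∂μ| ∂μ

/-- `M_δ^♯ f = (M^♯(|f|^δ))^{1/δ}`. -/
def sharpMaximalPow (μ : Measure X) (δ : ℝ) (f : X → ℝ) (x : X) : ℝ≥0∞ :=
  (sharpMaximal μ (fun y => |f y| ^ δ) x) ^ (1 / δ)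

/-- The multilinear maximal operator `𝓜(f⃗)`. -/
def multiMaximal (μ : Measure X) {m : ℕ} (f : Fin m → X → ℝ) (x : X) : ℝ≥0∞ :=
  ⨆ (c : X) (r : ℝ) (_ : 0 < r) (_ : x ∈ ball c r),
    ∏ j, ((μ (ball c r))⁻¹ * ∫⁻ y in ball c r, ENNReal.ofReal |f j y| ∂μ)

/-- `𝓜_s(f⃗) = (𝓜(|f₁|^s,…,|f_m|^s))^{1/s}`. -/
def multiMaximalPow (μ : Measure X) {m : ℕ} (s : ℝ) (f : Fin m → X → ℝ) (x : X) : ℝ≥0∞ :=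
  (multiMaximal μ (fun j y => |f j y| ^ s) x) ^ (1 / s)

/-- The Muckenhoupt `A₁` condition on a metric measure space. -/
def MemA1 (μ : Measure X) (w : X → ℝ) : Prop :=
  (∀ x, 0 ≤ w x) ∧ LocallyIntegrable w μ ∧
  ∃ C : ℝ, 0 < C ∧ ∀ (c : X) (r : ℝ), 0 < r →
    (μ (ball c r))⁻¹ * (∫⁻ y in ball c r, ENNReal.ofReal (w y) ∂μ) ≤
      ENNReal.ofReal C * essInf (fun y => ENNReal.ofReal (w y)) (μ.restrict (ball c r))

/-- The Muckenhoupt `A_p` condition, `1 < p < ∞`, on a metric measure space. -/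
def MemAp (μ : Measure X) (p : ℝ) (w : X → ℝ) : Prop :=
  (∀ x, 0 ≤ w x) ∧ LocallyIntegrable w μ ∧
  ∃ C : ℝ, 0 < C ∧ ∀ (c : X) (r : ℝ), 0 < r →
    ((μ (ball c r))⁻¹ * ∫⁻ y in ball c r, ENNReal.ofReal (w y) ∂μ) *
      ((μ (ball c r))⁻¹ *
        ∫⁻ y in ball c r, ENNReal.ofReal (w y ^ (-(1 / (p - 1)))) ∂μ) ^ (p - 1) ≤
      ENNReal.ofReal C

/-- `A_∞ = ⋃_{p ≥ 1} A_p`. -/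
def MemAinf (μ : Measure X) (w : X → ℝ) : Prop :=
  MemA1 μ w ∨ ∃ p : ℝ, 1 < p ∧ MemAp μ p w

/-- The `j`-th factor in the multilinear `A_{p⃗}` condition over a ball `B`:
`((μ B)⁻¹ ∫_B w^{1-p'} dμ)^{1/p'}`, read as `(ess inf_B w)⁻¹` when `p = 1`. -/
def apFactor (μ : Measure X) (pj : ℝ) (wj : X → ℝ) (B : Set X) : ℝ≥0∞ :=
  if pj = 1 then (essInf (fun y => ENNReal.ofReal (wj y)) (μ.restrict B))⁻¹
  else ((μ B)⁻¹ * ∫⁻ y in B, ENNReal.ofReal (wj y ^ (-(1 / (pj - 1)))) ∂μ) ^ (1 - 1 / pj)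

/-- The multiple-weight condition `A_{p⃗}` of Lerner–Grafakos type on a metric
measure space, where `1/p = ∑ 1/p_j` and `ν_{w⃗} = ∏ w_j^{p/p_j}`. -/
def MemAVec (μ : Measure X) {m : ℕ} (p : Fin m → ℝ) (w : Fin m → X → ℝ) : Prop :=
  (∀ j x, 0 ≤ w j x) ∧ (∀ j, LocallyIntegrable (w j) μ) ∧
  ∃ C : ℝ, 0 < C ∧ ∀ (c : X) (r : ℝ), 0 < r →
    ((μ (ball c r))⁻¹ *
        ∫⁻ y in ball c r,
          ENNReal.ofReal (∏ j, w j y ^ ((∑ i, 1 / p i)⁻¹ / p j)) ∂μ) ^ (∑ i, 1 / p i) *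
      ∏ j, apFactor μ (p j) (w j) (ball c r) ≤ ENNReal.ofReal C

/-- Generalized weighted Morrey norm `sup_B (φ(w(B))⁻¹ ∫_B |f|^p w dμ)^{1/p}`. -/
def morreyNormW (μ : Measure X) (p : ℝ) (φ : ℝ → ℝ) (w : X → ℝ) (f : X → ℝ) : ℝ≥0∞ :=
  ⨆ (c : X) (r : ℝ) (_ : 0 < r),
    ((ENNReal.ofReal
        (φ (∫⁻ y in ball c r, ENNReal.ofReal (w y) ∂μ).toReal))⁻¹ *
      ∫⁻ y in ball c r, ENNReal.ofReal (|f y| ^ p * w y) ∂μ) ^ (1 / p)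

/-- Generalized weighted Morrey norm of an `ℝ≥0∞`-valued function. -/
def morreyNormW' (μ : Measure X) (p : ℝ) (φ : ℝ → ℝ) (w : X → ℝ) (g : X → ℝ≥0∞) : ℝ≥0∞ :=
  ⨆ (c : X) (r : ℝ) (_ : 0 < r),
    ((ENNReal.ofReal
        (φ (∫⁻ y in ball c r, ENNReal.ofReal (w y) ∂μ).toReal))⁻¹ *
      ∫⁻ y in ball c r, g y ^ p * ENNReal.ofReal (w y) ∂μ) ^ (1 / p)

/-- An RD-space: a space of homogeneous type whose (regular Borel) measure is
doubling (with upper dimension `n = log₂ C₁`) and reverse doubling with exponent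
`κ ≤ n`; we also assume `μ(X) = ∞` throughout (which, together with the
finiteness of the measure of balls, forces `diam X = ∞`, so the reverse doubling
condition is stated for all radii and all `λ ≥ 1`). -/
structure IsRDSpace (μ : Measure X) (κ n : ℝ) : Prop where
  regular : μ.Regular
  ball_pos : ∀ (x : X) (r : ℝ), 0 < r → 0 < μ (ball x r)
  ball_lt_top : ∀ (x : X) (r : ℝ), 0 < r → μ (ball x r) < ⊤
  kappa_pos : 0 < κ
  kappa_le_n : κ ≤ n
  doubling : ∃ C₁ : ℝ, 1 ≤ C₁ ∧ n = Real.logb 2 C₁ ∧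
    ∀ (x : X) (r : ℝ), 0 < r → μ (ball x (2 * r)) ≤ ENNReal.ofReal C₁ * μ (ball x r)
  reverse_doubling : ∃ C₂ : ℝ, 0 < C₂ ∧ C₂ ≤ 1 ∧
    ∀ (x : X) (r lam : ℝ), 0 < r → 1 ≤ lam →
      ENNReal.ofReal (C₂ * lam ^ κ) * μ (ball x r) ≤ μ (ball x (lam * r))
  measure_univ_eq_top : μ Set.univ = ⊤

/-- There is a positive nondecreasing function `Φ` on `[0,∞)` with
`μ(B(x,r)) ≍ Φ(r)` uniformly in `x` and `r > 0`. -/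
def HasMeasureFunction (μ : Measure X) : Prop :=
  ∃ Φ : ℝ → ℝ, (∀ r : ℝ, 0 < r → 0 < Φ r) ∧ MonotoneOn Φ (Set.Ici (0 : ℝ)) ∧
    ∃ c₁ c₂ : ℝ, 0 < c₁ ∧ 0 < c₂ ∧ ∀ (x : X) (r : ℝ), 0 < r →
      ENNReal.ofReal (c₁ * Φ r) ≤ μ (ball x r) ∧ μ (ball x r) ≤ ENNReal.ofReal (c₂ * Φ r)

/-- `ρ(ȳ, x̄) = max_{1 ≤ j ≤ m} d(y_j, x)`. -/
def rho {m : ℕ} (x : X) (y : Fin m → X) : ℝ := ⨆ j, dist (y j) x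

/-- A strongly singular generalized kernel on an RD-space with parameters
`(m, ε, α, p₀)` (`p₀'` the conjugate exponent of `p₀`, RD-parameters `κ ≤ n`). -/
def IsSSGKernel (μ : Measure X) (m : ℕ) (κ n ε α p₀ p₀' : ℝ)
    (K : X → (Fin m → X) → ℝ) : Prop :=
  LocallyIntegrableOn (fun z : X × (Fin m → X) => K z.1 z.2)
    {z : X × (Fin m → X) | ¬ ∀ j, z.2 j = z.1} (μ.prod (Measure.pi fun _ : Fin m => μ)) ∧
  ∃ C_K : ℝ, 0 < C_K ∧ ∀ x x' : X, x ≠ x' → ∀ k : ℕ, 1 ≤ k →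
    (∫⁻ y in {y : Fin m → X |
        2 ^ k * dist x x' ^ (if 1 ≤ dist x x' then (1 : ℝ) else α) ≤ rho x y ∧
        rho x y ≤ 2 ^ (k + 1) * dist x x' ^ (if 1 ≤ dist x x' then (1 : ℝ) else α)},
      ENNReal.ofReal (|K x y - K x' y| ^ p₀) ∂(Measure.pi fun _ : Fin m => μ)) ^ (1 / p₀)
    ≤ ENNReal.ofReal (C_K *
        dist x x' ^ (ε - (if 1 ≤ dist x x' then (1 : ℝ) else α) *
          ((if 1 ≤ dist x x' then n else κ) * m / p₀' + ε / α)) *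
        2 ^ (-(k : ℝ) * (n * m / p₀' + ε / α)))

/-- An `m`-linear strongly singular integral operator with generalized kernel
(`m`-GSSIO) on an RD-space. -/
structure IsGSSIO (μ : Measure X) (m : ℕ) (κ n ε α p₀ p₀' q : ℝ)
    (r l : Fin m → ℝ) (T : (Fin m → X → ℝ) → X → ℝ) : Prop where
  m_pos : 0 < m
  eps_pos : 0 < ε
  alpha_pos : 0 < α
  alpha_le_one : α ≤ 1
  p0_gt_one : 1 < p₀
  p0_conj : 1 / p₀ + 1 / p₀' = 1
  kernel : ∃ K : X → (Fin m → X) → ℝ, IsSSGKernel μ m κ n ε α p₀ p₀' K ∧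
    ∀ f : Fin m → X → ℝ,
      (∀ j, ∃ L : ℝ≥0, LipschitzWith L (f j)) →
      (∀ j, IsBounded (tsupport (f j))) →
      ∀ x, x ∉ ⋂ j, tsupport (f j) →
        T f x = ∫ y : Fin m → X, K x y * ∏ j, f j (y j) ∂(Measure.pi fun _ : Fin m => μ)
  r_ge_one : ∀ j, 1 ≤ r j
  weak_r : ∃ C : ℝ, 0 < C ∧ ∀ f : Fin m → X → ℝ, (∀ j, Measurable (f j)) →
    weakLpNormW μ (∑ j, 1 / r j)⁻¹ (fun _ => 1) (T f) ≤
      ENNReal.ofReal C * ∏ j, lpNormW μ (r j) (fun _ => 1) (f j)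
  l_ge_one : ∀ j, 1 ≤ l j
  lq_pos : 0 < (∑ j, 1 / l j)⁻¹ / q
  lq_le : (∑ j, 1 / l j)⁻¹ / q ≤ α * κ / n
  weak_l : ∃ C : ℝ, 0 < C ∧ ∀ f : Fin m → X → ℝ, (∀ j, Measurable (f j)) →
    weakLpNormW μ q (fun _ => 1) (T f) ≤
      ENNReal.ofReal C * ∏ j, lpNormW μ (l j) (fun _ => 1) (f j)

end Defs

section Lintegral

variable {Y : Type*} [MeasurableSpace Y]

theorem lintegral_mul_le_Lp_mul_Lq_of_measurable_right (ν : Measure Y) {p q : ℝ}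
    (hpq : p.HolderConjugate q) (f : Y → ℝ≥0∞) {g : Y → ℝ≥0∞} (hg : Measurable g)
    (hg_top : ∀ y, g y ≠ ⊤) :
    ∫⁻ y, f y * g y ∂ν ≤ (∫⁻ y, f y ^ p ∂ν) ^ (1 / p) * (∫⁻ y, g y ^ q ∂ν) ^ (1 / q) := by
  -- Apply Hölder to the measurable `φ / g ≤ f`, for a measurable `φ ≤ f * g` with the same
  -- integral.
  obtain ⟨φ, hφ, hφ_le, hφ_eq⟩ := exists_measurable_le_lintegral_eq ν (fun y => f y * g y)
  have hf' : ∀ y, φ y * (g y)⁻¹ * g y = φ y ∧ φ y * (g y)⁻¹ ≤ f y := by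
    intro y
    rcases eq_or_ne (g y) 0 with h0 | h0
    · have : φ y = 0 := le_antisymm (by simpa [h0] using hφ_le y) bot_le
      simp [this]
    · refine ⟨by rw [mul_assoc, ENNReal.inv_mul_cancel h0 (hg_top y), mul_one], ?_⟩
      calc φ y * (g y)⁻¹ ≤ f y * g y * (g y)⁻¹ := mul_le_mul_left (hφ_le y) _
        _ = f y := by rw [mul_assoc, ENNReal.mul_inv_cancel h0 (hg_top y), mul_one]
  calc ∫⁻ y, f y * g y ∂ν = ∫⁻ y, φ y * (g y)⁻¹ * g y ∂ν :=
        hφ_eq.trans (lintegral_congr fun y => (hf' y).1.symm)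
    _ ≤ (∫⁻ y, (φ y * (g y)⁻¹) ^ p ∂ν) ^ (1 / p) * (∫⁻ y, g y ^ q ∂ν) ^ (1 / q) :=
        ENNReal.lintegral_mul_le_Lp_mul_Lq ν hpq (hφ.mul hg.inv).aemeasurable hg.aemeasurable
    _ ≤ (∫⁻ y, f y ^ p ∂ν) ^ (1 / p) * (∫⁻ y, g y ^ q ∂ν) ^ (1 / q) := by
        gcongr with y
        · exact one_div_nonneg.2 hpq.nonneg
        · exact hpq.nonneg
        · exact (hf' y).2

variable (ν : Measure Y) [SigmaFinite ν]

theorem lintegral_pi_prod_eq_prod :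
    ∀ {n : ℕ} (g : Fin n → Y → ℝ≥0∞), (∀ i, Measurable (g i)) →
      ∫⁻ y : Fin n → Y, ∏ i, g i (y i) ∂(Measure.pi fun _ => ν) = ∏ i, ∫⁻ t, g i t ∂ν
  | 0, g, _ => by simp
  | n + 1, g, hg => by
    have hmp := measurePreserving_piFinSuccAbove (fun _ : Fin (n + 1) => ν) 0
    have hprod : Measurable fun y : Fin (n + 1) → Y => ∏ i, g i (y i) :=
      Finset.measurable_prod _ fun i _ => (hg i).comp (measurable_pi_apply i)
    rw [← hmp.symm.lintegral_comp hprod]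
    simp only [MeasurableEquiv.piFinSuccAbove_symm_apply, Fin.insertNthEquiv, Fin.prod_univ_succ,
      Equiv.coe_fn_mk, Fin.insertNth_zero', Fin.cons_zero, Fin.cons_succ]
    have htail : Measurable fun y : Fin n → Y => ∏ i, g i.succ (y i) :=
      Finset.measurable_prod _ fun i _ => (hg i.succ).comp (measurable_pi_apply i)
    rw [lintegral_prod_mul (hg 0).aemeasurable htail.aemeasurable,
      lintegral_pi_prod_eq_prod (fun i => g i.succ) fun i => hg i.succ]

theorem setLIntegral_pi_prod_le_prod {n : ℕ} {g : Fin n → Y → ℝ≥0∞} (hg : ∀ i, Measurable (g i))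
    {s : Set (Fin n → Y)} {B : Set Y} (hs : s ⊆ univ.pi fun _ => B) :
    ∫⁻ y in s, ∏ i, g i (y i) ∂(Measure.pi fun _ => ν) ≤ ∏ i, ∫⁻ t in B, g i t ∂ν := by
  calc ∫⁻ y in s, ∏ i, g i (y i) ∂(Measure.pi fun _ => ν)
      ≤ ∫⁻ y in univ.pi fun _ => B, ∏ i, g i (y i) ∂(Measure.pi fun _ => ν) :=
        lintegral_mono_set hs
    _ = ∏ i, ∫⁻ t in B, g i t ∂ν := by
        rw [Measure.restrict_pi_pi]
        exact lintegral_pi_prod_eq_prod (ν.restrict B) g hg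

end Lintegral

section Balls

variable {X : Type*} [MetricSpace X] [MeasurableSpace X] {μ : Measure X}

theorem IsRDSpace.sigmaFinite {κ n : ℝ} (hRD : IsRDSpace μ κ n) : SigmaFinite μ := by
  rcases isEmpty_or_nonempty X with _ | ⟨⟨x₀⟩⟩
  · rw [Subsingleton.elim μ 0]
    infer_instance
  refine Measure.sigmaFinite_of_countable (S := range fun k : ℕ => ball x₀ k) (countable_range _)
    (forall_mem_range.2 fun k => ?_) (sUnion_range _ ▸ iUnion_ball_nat x₀)
  rcases k.eq_zero_or_pos with rfl | hk
  · simp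
  · exact hRD.ball_lt_top x₀ k (Nat.cast_pos.2 hk)

theorem measure_ball_two_pow_mul_le {C₁ : ℝ} (hC₁ : 0 ≤ C₁) {x : X}
    (hdb : ∀ r : ℝ, 0 < r → μ (ball x (2 * r)) ≤ ENNReal.ofReal C₁ * μ (ball x r))
    {r : ℝ} (hr : 0 < r) : ∀ k : ℕ, μ (ball x (2 ^ k * r)) ≤ ENNReal.ofReal (C₁ ^ k) * μ (ball x r)
  | 0 => by simp
  | k + 1 => by
    calc μ (ball x (2 ^ (k + 1) * r)) = μ (ball x (2 * (2 ^ k * r))) := by rw [pow_succ']; ring_nf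
      _ ≤ ENNReal.ofReal C₁ * (ENNReal.ofReal (C₁ ^ k) * μ (ball x r)) :=
        (hdb _ (by positivity)).trans
          (mul_le_mul_right (measure_ball_two_pow_mul_le hC₁ hdb hr k) _)
      _ = ENNReal.ofReal (C₁ ^ (k + 1)) * μ (ball x r) := by
        rw [← mul_assoc, ← ENNReal.ofReal_mul hC₁, pow_succ']

theorem measure_ball_le_of_reverse_doubling {κ C₂ M : ℝ} (hC₂ : 0 < C₂) {x : X}
    (hrd : ∀ r lam : ℝ, 0 < r → 1 ≤ lam →
      ENNReal.ofReal (C₂ * lam ^ κ) * μ (ball x r) ≤ μ (ball x (lam * r)))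
    (hM : μ (ball x 1) ≤ ENNReal.ofReal M) {r : ℝ} (hr : 0 < r) (hr1 : r ≤ 1) :
    μ (ball x r) ≤ ENNReal.ofReal (M / C₂ * r ^ κ) := by
  have hc : 0 < C₂ * r⁻¹ ^ κ := by positivity
  have h := (hrd r r⁻¹ hr ((one_le_inv₀ hr).2 hr1)).trans_eq (by rw [inv_mul_cancel₀ hr.ne'])
  calc μ (ball x r) ≤ (ENNReal.ofReal (C₂ * r⁻¹ ^ κ))⁻¹ * ENNReal.ofReal M := by
        rw [← ENNReal.mul_le_iff_le_inv (by positivity) ENNReal.ofReal_ne_top]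
        exact h.trans hM
    _ = ENNReal.ofReal (M / C₂ * r ^ κ) := by
        rw [← ENNReal.ofReal_inv_of_pos hc, ← ENNReal.ofReal_mul (inv_nonneg.2 hc.le),
          Real.inv_rpow hr.le]
        congr 1
        field_simp

theorem measure_ball_two_pow_mul_le_of_le_one {κ C₁ C₂ M : ℝ} (hC₁ : 0 ≤ C₁) (hC₂ : 0 < C₂)
    {x : X} (hdb : ∀ r : ℝ, 0 < r → μ (ball x (2 * r)) ≤ ENNReal.ofReal C₁ * μ (ball x r))
    (hrd : ∀ r lam : ℝ, 0 < r → 1 ≤ lam →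
      ENNReal.ofReal (C₂ * lam ^ κ) * μ (ball x r) ≤ μ (ball x (lam * r)))
    (hM : μ (ball x 1) ≤ ENNReal.ofReal M) {r : ℝ} (hr : 0 < r) (hr1 : r ≤ 1) (k : ℕ) :
    μ (ball x (2 ^ k * r)) ≤ ENNReal.ofReal (M / C₂ * C₁ ^ k * r ^ κ) := by
  calc μ (ball x (2 ^ k * r))
      ≤ ENNReal.ofReal (C₁ ^ k) * ENNReal.ofReal (M / C₂ * r ^ κ) :=
        (measure_ball_two_pow_mul_le hC₁ hdb hr k).trans <| by
          gcongr
          exact measure_ball_le_of_reverse_doubling hC₂ hrd hM hr hr1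
    _ = ENNReal.ofReal (M / C₂ * C₁ ^ k * r ^ κ) := by
        rw [← ENNReal.ofReal_mul (by positivity)]
        congr 1
        ring

theorem HasMeasureFunction.exists_measure_ball_one_le (hΦ : HasMeasureFunction μ) :
    ∃ M : ℝ, 0 < M ∧ ∀ x : X, μ (ball x 1) ≤ ENNReal.ofReal M := by
  obtain ⟨Φ, hΦ_pos, -, _, c₂, -, hc₂, hΦ_bd⟩ := hΦ
  exact ⟨c₂ * Φ 1, mul_pos hc₂ (hΦ_pos 1 one_pos), fun x => (hΦ_bd x 1 one_pos).2⟩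

end Balls

section Annuli

variable {X : Type*} [MetricSpace X] {m : ℕ}

def rhoAnnulus (x : X) (R : ℝ) (k : ℕ) : Set (Fin m → X) :=
  {y | 2 ^ k * R ≤ rho x y ∧ rho x y ≤ 2 ^ (k + 1) * R}

theorem dist_le_rho (x : X) (y : Fin m → X) (j : Fin m) : dist (y j) x ≤ rho x y :=
  le_ciSup (f := fun i => dist (y i) x) (Set.finite_range _).bddAbove j

theorem setOf_two_mul_le_rho_subset_iUnion_rhoAnnulus (x : X) {R : ℝ} (hR : 0 < R) :
    {y : Fin m → X | 2 * R ≤ rho x y} ⊆ ⋃ k : ℕ, rhoAnnulus x R (k + 1) := by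
  intro y hy
  have h1 : 1 ≤ rho x y / (2 * R) := (one_le_div (by positivity)).2 hy
  obtain ⟨k, hk, hk'⟩ := exists_nat_pow_near h1 one_lt_two
  rw [le_div_iff₀ (by positivity)] at hk
  rw [div_lt_iff₀ (by positivity)] at hk'
  refine mem_iUnion.2 ⟨k, ?_, ?_⟩ <;> rw [pow_succ] <;> linarith

theorem rhoAnnulus_subset_pi_ball (x : X) {R : ℝ} (hR : 0 < R) (k : ℕ) :
    (rhoAnnulus x R k : Set (Fin m → X)) ⊆ univ.pi fun _ => ball x (2 ^ (k + 2) * R) := by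
  intro y hy j _
  have : (2 : ℝ) ^ (k + 1) * R < 2 ^ (k + 2) * R := by gcongr <;> norm_num
  exact mem_ball.2 ((dist_le_rho x y j).trans hy.2 |>.trans_lt this)

end Annuli

section Maximal

variable {X : Type*} [MetricSpace X] [MeasurableSpace X] {μ : Measure X} {m : ℕ}

theorem prod_setLIntegral_ball_le_multiMaximal (g : Fin m → X → ℝ) {c x : X} {r : ℝ}
    (hr : 0 < r) (hx : x ∈ ball c r) (h0 : μ (ball c r) ≠ 0) (htop : μ (ball c r) ≠ ⊤) :
    ∏ j, ∫⁻ y in ball c r, ENNReal.ofReal |g j y| ∂μ ≤ μ (ball c r) ^ m * multiMaximal μ g x := by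
  calc ∏ j, ∫⁻ y in ball c r, ENNReal.ofReal |g j y| ∂μ
      = μ (ball c r) ^ m *
          ∏ j, ((μ (ball c r))⁻¹ * ∫⁻ y in ball c r, ENNReal.ofReal |g j y| ∂μ) := by
        rw [Finset.prod_mul_distrib, Finset.prod_const, Finset.card_univ, Fintype.card_fin,
          ← mul_assoc, ← mul_pow, ENNReal.mul_inv_cancel h0 htop, one_pow, one_mul]
    _ ≤ μ (ball c r) ^ m * multiMaximal μ g x := by
        gcongr
        exact le_iSup₂_of_le c r (le_iSup₂_of_le (α := ℝ≥0∞) hr hx le_rfl)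

variable [SigmaFinite μ]

theorem setLIntegral_mul_prod_le_multiMaximalPow {p q : ℝ} (hpq : p.HolderConjugate q)
    (F : (Fin m → X) → ℝ≥0∞) {f : Fin m → X → ℝ} (hf : ∀ j, Measurable (f j))
    {s : Set (Fin m → X)} {c x : X} {r : ℝ} (hr : 0 < r) (hs : s ⊆ univ.pi fun _ => ball c r)
    (hx : x ∈ ball c r) (h0 : μ (ball c r) ≠ 0) (htop : μ (ball c r) ≠ ⊤) :
    ∫⁻ y in s, F y * ∏ j, ENNReal.ofReal |f j (y j)| ∂(Measure.pi fun _ => μ) ≤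
      (∫⁻ y in s, F y ^ p ∂(Measure.pi fun _ => μ)) ^ (1 / p) * μ (ball c r) ^ ((m : ℝ) / q) *
        multiMaximalPow μ q f x := by
  have hq : 0 < q := hpq.symm.pos
  have hG : Measurable fun y : Fin m → X => ∏ j, ENNReal.ofReal |f j (y j)| :=
    Finset.measurable_prod _ fun j _ =>
      ENNReal.measurable_ofReal.comp ((hf j).comp (measurable_pi_apply j)).abs
  have hGq : ∫⁻ y in s, (∏ j, ENNReal.ofReal |f j (y j)|) ^ q ∂(Measure.pi fun _ => μ) ≤
      μ (ball c r) ^ m * multiMaximal μ (fun j y => |f j y| ^ q) x := by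
    calc ∫⁻ y in s, (∏ j, ENNReal.ofReal |f j (y j)|) ^ q ∂(Measure.pi fun _ => μ)
        = ∫⁻ y in s, ∏ j, ENNReal.ofReal |(|f j (y j)| ^ q)| ∂(Measure.pi fun _ => μ) := by
          refine lintegral_congr fun y => ?_
          rw [← ENNReal.prod_rpow_of_nonneg hq.le]
          refine Finset.prod_congr rfl fun j _ => ?_
          rw [abs_of_nonneg (Real.rpow_nonneg (abs_nonneg _) q),
            ENNReal.ofReal_rpow_of_nonneg (abs_nonneg _) hq.le]
      _ ≤ ∏ j, ∫⁻ t in ball c r, ENNReal.ofReal |(|f j t| ^ q)| ∂μ :=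
          setLIntegral_pi_prod_le_prod μ (fun j =>
            ENNReal.measurable_ofReal.comp ((hf j).abs.pow_const q).abs) hs
      _ ≤ μ (ball c r) ^ m * multiMaximal μ (fun j y => |f j y| ^ q) x :=
          prod_setLIntegral_ball_le_multiMaximal _ hr hx h0 htop
  calc ∫⁻ y in s, F y * ∏ j, ENNReal.ofReal |f j (y j)| ∂(Measure.pi fun _ => μ)
      ≤ (∫⁻ y in s, F y ^ p ∂(Measure.pi fun _ => μ)) ^ (1 / p) *
          (∫⁻ y in s, (∏ j, ENNReal.ofReal |f j (y j)|) ^ q ∂(Measure.pi fun _ => μ)) ^ (1 / q) :=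
        lintegral_mul_le_Lp_mul_Lq_of_measurable_right _ hpq F hG fun y =>
          ENNReal.prod_ne_top fun j _ => ENNReal.ofReal_ne_top
    _ ≤ (∫⁻ y in s, F y ^ p ∂(Measure.pi fun _ => μ)) ^ (1 / p) *
          (μ (ball c r) ^ m * multiMaximal μ (fun j y => |f j y| ^ q) x) ^ (1 / q) := by
        gcongr
    _ = (∫⁻ y in s, F y ^ p ∂(Measure.pi fun _ => μ)) ^ (1 / p) * μ (ball c r) ^ ((m : ℝ) / q) *
          multiMaximalPow μ q f x := by
        rw [ENNReal.mul_rpow_of_nonneg _ _ (by positivity), ← ENNReal.rpow_natCast,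
          ← ENNReal.rpow_mul, mul_one_div, multiMaximalPow, mul_assoc]

end Maximal

/-- The kernel bound on the `k`-th annulus times `μ(B(u₀, 2^(k+2) d^α))^(m/q)`: the powers of `d`
cancel exactly, leaving the decay `2^(-kε/α)`. -/
theorem kernel_decay_mul_ball_bound_eq {d α ε κ n q A : ℝ} (m k : ℕ) (hd : 0 < d) (hα : α ≠ 0)
    (hA : 0 < A) :
    d ^ (ε - α * (κ * m / q + ε / α)) * 2 ^ (-(k : ℝ) * (n * m / q + ε / α)) *
        (A * (2 ^ n) ^ (k + 2) * (d ^ α) ^ κ) ^ ((m : ℝ) / q) =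
      (A * (2 ^ n) ^ 2) ^ ((m : ℝ) / q) * (2 ^ (-(ε / α))) ^ k := by
  have h2 : (0 : ℝ) < 2 := two_pos
  simp only [← Real.rpow_natCast, ← Real.rpow_mul h2.le, ← Real.rpow_mul hd.le]
  rw [Real.mul_rpow (by positivity) (by positivity), Real.mul_rpow hA.le (by positivity),
    Real.mul_rpow hA.le (by positivity), ← Real.rpow_mul h2.le, ← Real.rpow_mul h2.le,
    ← Real.rpow_mul hd.le]
  have e1 : d ^ (ε - α * (κ * m / q + ε / α)) * (d ^ (α * κ * (m / q))) = 1 := by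
    rw [← Real.rpow_add hd]; convert Real.rpow_zero d using 2; field_simp; ring
  calc _ = (d ^ (ε - α * (κ * m / q + ε / α)) * d ^ (α * κ * (m / q))) * A ^ ((m : ℝ) / q) *
        (2 ^ (-(k : ℝ) * (n * m / q + ε / α)) * 2 ^ (n * ((k + 2 : ℕ) : ℝ) * (m / q))) := by ring
    _ = _ := by
      rw [e1, ← Real.rpow_add h2, one_mul, mul_assoc (A ^ ((m : ℝ) / q)), ← Real.rpow_add h2]
      congr 2
      push_cast
      field_simp
      ring

theorem tsum_ofReal_mul_pow_succ_le {C r : ℝ} (hC : 0 ≤ C) (hr0 : 0 ≤ r) (hr1 : r < 1) :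
    ∑' k : ℕ, ENNReal.ofReal (C * r ^ (k + 1)) ≤ ENNReal.ofReal (C * (1 - r)⁻¹) := by
  calc ∑' k : ℕ, ENNReal.ofReal (C * r ^ (k + 1))
      ≤ ∑' k : ℕ, ENNReal.ofReal C * ENNReal.ofReal r ^ k := by
        refine ENNReal.tsum_le_tsum fun k => ?_
        rw [← ENNReal.ofReal_pow hr0, ← ENNReal.ofReal_mul hC]
        exact ENNReal.ofReal_le_ofReal
          (mul_le_mul_of_nonneg_left (pow_le_pow_of_le_one hr0 hr1.le k.le_succ) hC)
    _ = ENNReal.ofReal (C * (1 - r)⁻¹) := by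
        rw [ENNReal.tsum_mul_left, ENNReal.tsum_geometric, ENNReal.ofReal_mul hC,
          ENNReal.ofReal_inv_of_pos (by linarith), ENNReal.ofReal_sub 1 hr0, ENNReal.ofReal_one]

theorem IsSSGKernel.exists_lintegral_rhoAnnulus_rpow_le {X : Type*} [MetricSpace X]
    [MeasurableSpace X] [BorelSpace X] {μ : Measure X} {m : ℕ} {κ n ε α p₀ p₀' : ℝ}
    {K : X → (Fin m → X) → ℝ} (hK : IsSSGKernel μ m κ n ε α p₀ p₀' K) (hp₀ : 0 ≤ p₀) :
    ∃ C_K : ℝ, 0 < C_K ∧ ∀ z u₀ : X, 0 < dist z u₀ → dist z u₀ < 1 → ∀ k : ℕ, 1 ≤ k →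
      (∫⁻ y in rhoAnnulus u₀ (dist z u₀ ^ α) k, ENNReal.ofReal |K z y - K u₀ y| ^ p₀
          ∂(Measure.pi fun _ : Fin m => μ)) ^ (1 / p₀) ≤
        ENNReal.ofReal (C_K * dist z u₀ ^ (ε - α * (κ * m / p₀' + ε / α)) *
          2 ^ (-(k : ℝ) * (n * m / p₀' + ε / α))) := by
  obtain ⟨-, C_K, hC_K, hK_diff⟩ := hK
  refine ⟨C_K, hC_K, fun z u₀ hd hd1 k hk => ?_⟩
  have h := hK_diff u₀ z (dist_pos.1 hd).symm k hk
  rw [dist_comm u₀ z] at h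
  simp only [if_neg (not_le.2 hd1)] at h
  refine le_of_eq_of_le ?_ h
  congr 1
  refine lintegral_congr fun y => ?_
  rw [abs_sub_comm, ENNReal.ofReal_rpow_of_nonneg (abs_nonneg _) hp₀]

theorem IsSSGKernel.exists_setLIntegral_rhoAnnulus_le {X : Type*} [MetricSpace X]
    [MeasurableSpace X] [BorelSpace X] {μ : Measure X} {κ n : ℝ} (hRD : IsRDSpace μ κ n)
    (hΦ : HasMeasureFunction μ) {m : ℕ} {ε α p₀ p₀' : ℝ} (hα : 0 < α)
    (hpq : p₀.HolderConjugate p₀') {K : X → (Fin m → X) → ℝ}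
    (hK : IsSSGKernel μ m κ n ε α p₀ p₀' K) :
    ∃ C : ℝ, 0 < C ∧ ∀ z u₀ x : X, 0 < dist z u₀ → dist z u₀ < 1 →
      dist x u₀ ≤ 2 * dist z u₀ ^ α → ∀ f : Fin m → X → ℝ, (∀ j, Measurable (f j)) →
      ∀ k : ℕ, 1 ≤ k →
        ∫⁻ y in rhoAnnulus u₀ (dist z u₀ ^ α) k,
            ENNReal.ofReal |K z y - K u₀ y| * ∏ j, ENNReal.ofReal |f j (y j)|
              ∂(Measure.pi fun _ : Fin m => μ)
          ≤ ENNReal.ofReal (C * (2 ^ (-(ε / α))) ^ k) * multiMaximalPow μ p₀' f x := by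
  obtain ⟨C_K, hC_K, hK_near⟩ := hK.exists_lintegral_rhoAnnulus_rpow_le hpq.nonneg
  obtain ⟨C₁, hC₁, hn, hdb⟩ := hRD.doubling
  obtain ⟨C₂, hC₂, -, hrd⟩ := hRD.reverse_doubling
  obtain ⟨M, hM, hM_ball⟩ := hΦ.exists_measure_ball_one_le
  have hC₁_eq : C₁ = 2 ^ n := by rw [hn, Real.rpow_logb two_pos (by norm_num) (by linarith)]
  have := hRD.sigmaFinite
  have hq : 0 < p₀' := hpq.symm.pos
  refine ⟨C_K * (M / C₂ * C₁ ^ 2) ^ ((m : ℝ) / p₀'), by positivity, ?_⟩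
  intro z u₀ x hd hd1 hx f hf k hk
  have hD : 0 < dist z u₀ ^ α := by positivity
  have hR : 0 < 2 ^ (k + 2) * dist z u₀ ^ α := by positivity
  have hxB : x ∈ ball u₀ (2 ^ (k + 2) * dist z u₀ ^ α) := by
    refine mem_ball.2 (hx.trans_lt ?_)
    gcongr
    exact (pow_one (2 : ℝ)).symm.trans_lt (pow_lt_pow_right₀ one_lt_two (by omega))
  have hball := measure_ball_two_pow_mul_le_of_le_one (by linarith) hC₂ (hdb u₀) (hrd u₀)
    (hM_ball u₀) hD (Real.rpow_le_one hd.le hd1.le hα.le) (k + 2)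
  have hker := hK_near z u₀ hd hd1 k hk
  calc _ ≤ _ := setLIntegral_mul_prod_le_multiMaximalPow hpq _ hf hR
        (rhoAnnulus_subset_pi_ball u₀ hD k) hxB (hRD.ball_pos u₀ _ hR).ne'
        (hRD.ball_lt_top u₀ _ hR).ne
    _ ≤ ENNReal.ofReal (C_K * dist z u₀ ^ (ε - α * (κ * m / p₀' + ε / α)) *
          2 ^ (-(k : ℝ) * (n * m / p₀' + ε / α))) *
        ENNReal.ofReal (M / C₂ * C₁ ^ (k + 2) * (dist z u₀ ^ α) ^ κ) ^ ((m : ℝ) / p₀') *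
          multiMaximalPow μ p₀' f x := by
        gcongr
    _ = ENNReal.ofReal (C_K * (M / C₂ * C₁ ^ 2) ^ ((m : ℝ) / p₀') * (2 ^ (-(ε / α))) ^ k) *
          multiMaximalPow μ p₀' f x := by
        rw [ENNReal.ofReal_rpow_of_nonneg (by positivity) (by positivity),
          ← ENNReal.ofReal_mul (by positivity), hC₁_eq, mul_assoc C_K, mul_assoc C_K,
          kernel_decay_mul_ball_bound_eq m k hd hα.ne' (by positivity), mul_assoc]

theorem kernel_estimate_near_general
    {X : Type*} [MetricSpace X] [MeasurableSpace X] [BorelSpace X]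
    (μ : Measure X) (κ n : ℝ) (hRD : IsRDSpace μ κ n) (hΦ : HasMeasureFunction μ)
    (m : ℕ) (ε α p₀ p₀' : ℝ)
    (hε : 0 < ε) (hα0 : 0 < α)
    (hp₀ : 1 < p₀) (hconj : 1 / p₀ + 1 / p₀' = 1)
    (K : X → (Fin m → X) → ℝ) (hK : IsSSGKernel μ m κ n ε α p₀ p₀' K) :
    ∃ C : ℝ, 0 < C ∧ ∀ z u₀ x : X, 0 < dist z u₀ → dist z u₀ < 1 →
      dist x u₀ ≤ 2 * dist z u₀ ^ α →
      ∀ f : Fin m → X → ℝ,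
        (∀ j, Measurable (f j)) →
        (∀ j, ∀ (c : X) (rad : ℝ), 0 < rad →
          ∫⁻ y in ball c rad, ENNReal.ofReal (|f j y| ^ p₀') ∂μ < ⊤) →
        (∫⁻ y in {y : Fin m → X | 2 * dist z u₀ ^ α ≤ rho u₀ y},
            ENNReal.ofReal |K z y - K u₀ y| * ∏ j, ENNReal.ofReal |f j (y j)|
              ∂(Measure.pi fun _ : Fin m => μ))
          ≤ ENNReal.ofReal C * multiMaximalPow μ p₀' f x := by
  have hpq : p₀.HolderConjugate p₀' :=
    Real.holderConjugate_iff.2 ⟨hp₀, by simpa only [one_div] using hconj⟩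
  obtain ⟨C, hC, h_annulus⟩ := hK.exists_setLIntegral_rhoAnnulus_le hRD hΦ hα0 hpq
  have hr0 : (0 : ℝ) ≤ 2 ^ (-(ε / α)) := by positivity
  have hr1 : (2 : ℝ) ^ (-(ε / α)) < 1 :=
    Real.rpow_lt_one_of_one_lt_of_neg one_lt_two (neg_neg_of_pos (div_pos hε hα0))
  refine ⟨C * (1 - 2 ^ (-(ε / α)))⁻¹, mul_pos hC (inv_pos.2 (sub_pos.2 hr1)),
    fun z u₀ x hd hd1 hx f hf _ => ?_⟩
  calc _ ≤ ∫⁻ y in ⋃ k : ℕ, rhoAnnulus u₀ (dist z u₀ ^ α) (k + 1),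
          ENNReal.ofReal |K z y - K u₀ y| * ∏ j, ENNReal.ofReal |f j (y j)|
            ∂(Measure.pi fun _ : Fin m => μ) :=
        lintegral_mono_set (setOf_two_mul_le_rho_subset_iUnion_rhoAnnulus u₀ (by positivity))
    _ ≤ ∑' k : ℕ, ∫⁻ y in rhoAnnulus u₀ (dist z u₀ ^ α) (k + 1),
          ENNReal.ofReal |K z y - K u₀ y| * ∏ j, ENNReal.ofReal |f j (y j)|
            ∂(Measure.pi fun _ : Fin m => μ) := lintegral_iUnion_le _ _
    _ ≤ ∑' k : ℕ, ENNReal.ofReal (C * (2 ^ (-(ε / α))) ^ (k + 1)) * multiMaximalPow μ p₀' f x :=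
        ENNReal.tsum_le_tsum fun k => h_annulus z u₀ x hd hd1 hx f hf (k + 1) le_add_self
    _ ≤ ENNReal.ofReal (C * (1 - 2 ^ (-(ε / α)))⁻¹) * multiMaximalPow μ p₀' f x := by
        rw [ENNReal.tsum_mul_right]
        gcongr
        exact tsum_ofReal_mul_pow_succ_le hC.le hr0 hr1

/-- Kernel estimate (small distance case, from the proof of Theorem 2.1):
for a strongly singular generalized kernel `K`, if `0 < d(z,u₀) < 1` and
`d(x,u₀) ≤ 2 d(z,u₀)^α`, then
`∫_{ρ(ȳ,ū₀) ≥ 2 d(z,u₀)^α} |K(z,ȳ) − K(u₀,ȳ)| ∏ |f_j(y_j)| dμ⃗(ȳ)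
  ≤ C 𝓜_{p₀'}(f⃗)(x)`. -/
theorem kernel_estimate_near
    {X : Type*} [MetricSpace X] [MeasurableSpace X] [BorelSpace X]
    (μ : Measure X) (κ n : ℝ) (hRD : IsRDSpace μ κ n) (hΦ : HasMeasureFunction μ)
    (m : ℕ) (hm : 0 < m) (ε α p₀ p₀' : ℝ)
    (hε : 0 < ε) (hα0 : 0 < α) (hα1 : α ≤ 1)
    (hp₀ : 1 < p₀) (hconj : 1 / p₀ + 1 / p₀' = 1)
    (K : X → (Fin m → X) → ℝ) (hK : IsSSGKernel μ m κ n ε α p₀ p₀' K) :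
    ∃ C : ℝ, 0 < C ∧ ∀ z u₀ x : X, 0 < dist z u₀ → dist z u₀ < 1 →
      dist x u₀ ≤ 2 * dist z u₀ ^ α →
      ∀ f : Fin m → X → ℝ,
        (∀ j, Measurable (f j)) →
        (∀ j, ∀ (c : X) (rad : ℝ), 0 < rad →
          ∫⁻ y in ball c rad, ENNReal.ofReal (|f j y| ^ p₀') ∂μ < ⊤) →
        (∫⁻ y in {y : Fin m → X | 2 * dist z u₀ ^ α ≤ rho u₀ y},
            ENNReal.ofReal |K z y - K u₀ y| * ∏ j, ENNReal.ofReal |f j (y j)|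
              ∂(Measure.pi fun _ : Fin m => μ))
          ≤ ENNReal.ofReal C * multiMaximalPow μ p₀' f x :=
  kernel_estimate_near_general μ κ n hRD hΦ m ε α p₀ p₀' hε hα0 hp₀ hconj K hK
end
end

section
/- Let (X,d,μ) be an RD-space with μ(X)=∞ and let T be an m-linear operator that is bounded from L^{r₁}(X)×⋯×L^{r_m}(X) to L^{r,∞}(X), where 1≤r₁,…,r_m<∞ and 1/r=1/r₁+⋯+1/r_m, and let p₀' ≥ max{r₁,…,r_m}. Then for every 0<δ<r there exists C>0 such that for every ball B⊂X, every x∈B, and every m-tuple f⃗=(f₁,…,f_m) of bounded measurable functions with bounded support, (μ(B)^{-1}∫_B |T(f₁χ_{32B},…,f_mχ_{32B})(z)|^δ dμ(z))^{1/δ} ≤ C·𝓜_{p₀'}(f⃗)(x), where 32B denotes the concentric 32-fold dilate of B and χ_E the indicator of E. -/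
open MeasureTheory Metric ENNReal Set Bornology
open scoped BigOperators NNReal ENNReal

noncomputable section

/-! Kolmogorov's inequality bounds the `L^δ`-average over `B` of `g = T(f₁χ_{32B},…,f_mχ_{32B})`
by `μ(B)^{-1/r} ‖g‖_{L^{r,∞}}` when `δ < r`. The weak-type bound of `T` and Hölder's inequality
on `32B` (using `r_j ≤ p₀'`) give `‖g‖_{L^{r,∞}} ≲ ∏ ‖f_j χ_{32B}‖_{L^{r_j}} ≤
μ(32B)^{1/r} 𝓜_{p₀'}(f⃗)(x)`, and doubling replaces `μ(32B)` by `μ(B)`. -/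

namespace ENNReal

lemma rpow_sum {ι : Type*} {x : ℝ≥0∞} (hx0 : x ≠ 0) (hxT : x ≠ ⊤) (s : Finset ι) (a : ι → ℝ) :
    x ^ (∑ i ∈ s, a i) = ∏ i ∈ s, x ^ a i := by
  induction s using Finset.cons_induction with
  | empty => simp
  | cons i s _ ih => rw [Finset.sum_cons, Finset.prod_cons, ENNReal.rpow_add _ _ hx0 hxT, ih]

lemma le_rpow_mul_rpow_neg_of_mul_rpow_le {a b c : ℝ≥0∞} {s : ℝ} (hs : 0 < s) (ha0 : a ≠ 0)
    (haT : a ≠ ⊤) (h : a * b ^ (1 / s) ≤ c) : b ≤ c ^ s * a ^ (-s) :=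
  calc b = (a * b ^ (1 / s)) ^ s * a ^ (-s) := by
        rw [ENNReal.mul_rpow_of_nonneg _ _ hs.le, ← ENNReal.rpow_mul, one_div_mul_cancel hs.ne',
          ENNReal.rpow_one, mul_right_comm, ← ENNReal.rpow_add _ _ ha0 haT, add_neg_cancel,
          ENNReal.rpow_zero, one_mul]
    _ ≤ c ^ s * a ^ (-s) := by gcongr

end ENNReal

lemma lintegral_Ioc_zero_ofReal_rpow {A q : ℝ} (hA : 0 ≤ A) (hq : -1 < q) :
    ∫⁻ t in Ioc 0 A, ENNReal.ofReal (t ^ q) = ENNReal.ofReal (A ^ (q + 1) / (q + 1)) := by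
  rw [← ofReal_integral_eq_lintegral_ofReal (intervalIntegral.intervalIntegrable_rpow' hq).1,
    ← intervalIntegral.integral_of_le hA, integral_rpow (Or.inl hq),
    Real.zero_rpow (by linarith), sub_zero]
  filter_upwards [self_mem_ae_restrict measurableSet_Ioc] with t ht
  exact Real.rpow_nonneg ht.1.le _

lemma lintegral_Ioi_ofReal_rpow {A q : ℝ} (hA : 0 < A) (hq : q < -1) :
    ∫⁻ t in Ioi A, ENNReal.ofReal (t ^ q) = ENNReal.ofReal (A ^ (q + 1) / -(q + 1)) := by
  rw [← ofReal_integral_eq_lintegral_ofReal (integrableOn_Ioi_rpow_of_lt hq hA),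
    integral_Ioi_rpow_of_lt hq hA, neg_div, div_neg]
  filter_upwards [self_mem_ae_restrict measurableSet_Ioi] with t ht
  exact Real.rpow_nonneg (hA.trans ht).le _

lemma lintegral_Ioc_min_mul_rpow_le {a b s δ A : ℝ} (ha : 0 ≤ a) (hδ : 0 < δ) (hA : 0 ≤ A) :
    ∫⁻ t in Ioc 0 A, ENNReal.ofReal (min a (b * t ^ (-s)) * t ^ (δ - 1)) ≤
      ENNReal.ofReal a * ENNReal.ofReal (A ^ δ / δ) :=
  calc _ ≤ ∫⁻ t in Ioc 0 A, ENNReal.ofReal a * ENNReal.ofReal (t ^ (δ - 1)) := by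
        refine setLIntegral_mono' measurableSet_Ioc fun t ht => ?_
        rw [← ENNReal.ofReal_mul ha]
        gcongr
        · exact Real.rpow_nonneg ht.1.le _
        · exact min_le_left _ _
    _ = _ := by
        rw [lintegral_const_mul' _ _ ENNReal.ofReal_ne_top,
          lintegral_Ioc_zero_ofReal_rpow hA (by linarith), sub_add_cancel]

lemma lintegral_Ioi_min_mul_rpow_le {a b s δ A : ℝ} (hb : 0 ≤ b) (hδs : δ < s) (hA : 0 < A) :
    ∫⁻ t in Ioi A, ENNReal.ofReal (min a (b * t ^ (-s)) * t ^ (δ - 1)) ≤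
      ENNReal.ofReal b * ENNReal.ofReal (A ^ (δ - s) / (s - δ)) :=
  calc _ ≤ ∫⁻ t in Ioi A, ENNReal.ofReal b * ENNReal.ofReal (t ^ (δ - 1 - s)) := by
        refine setLIntegral_mono' measurableSet_Ioi fun t ht => ?_
        have ht0 : 0 < t := hA.trans ht
        rw [← ENNReal.ofReal_mul hb,
          show b * t ^ (δ - 1 - s) = b * t ^ (-s) * t ^ (δ - 1) by
            rw [mul_assoc, ← Real.rpow_add ht0]; ring_nf]
        gcongr
        exact min_le_right _ _
    _ = _ := by
        rw [lintegral_const_mul' _ _ ENNReal.ofReal_ne_top,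
          lintegral_Ioi_ofReal_rpow hA (by linarith), show δ - 1 - s + 1 = δ - s by ring, neg_sub]

lemma lintegral_Ioi_zero_min_mul_rpow_le {a b δ s : ℝ} (ha : 0 < a) (hb : 0 ≤ b) (hδ : 0 < δ)
    (hδs : δ < s) :
    ∫⁻ t in Ioi 0, ENNReal.ofReal (min a (b * t ^ (-s)) * t ^ (δ - 1)) ≤
      ENNReal.ofReal (s / (δ * (s - δ)) * a ^ (1 - δ / s) * b ^ (δ / s)) := by
  rcases hb.eq_or_lt with rfl | hb
  · simp [min_eq_right ha.le]
  have hs : 0 < s := hδ.trans hδs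
  -- split at the level `A` where the two bounds in the minimum cross
  set A := (b / a) ^ (1 / s) with hA
  have hA0 : 0 < A := by positivity
  have hAa : a * A ^ δ = a ^ (1 - δ / s) * b ^ (δ / s) := by
    rw [hA, ← Real.rpow_mul (by positivity), Real.div_rpow hb.le ha.le, Real.rpow_sub ha,
      Real.rpow_one]
    field_simp
  have hAb : b * A ^ (δ - s) = a ^ (1 - δ / s) * b ^ (δ / s) := by
    rw [← hAa, hA, ← Real.rpow_mul (by positivity), ← Real.rpow_mul (by positivity),
      show 1 / s * (δ - s) = δ / s - 1 by field_simp, Real.rpow_sub_one (by positivity)]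
    field_simp
  rw [← Ioc_union_Ioi_eq_Ioi hA0.le, lintegral_union measurableSet_Ioi Ioc_disjoint_Ioi_same]
  refine (add_le_add (lintegral_Ioc_min_mul_rpow_le ha.le hδ hA0.le)
    (lintegral_Ioi_min_mul_rpow_le hb.le hδs hA0)).trans_eq ?_
  have : s - δ ≠ 0 := by linarith
  rw [← ENNReal.ofReal_mul ha.le, ← ENNReal.ofReal_mul hb.le,
    ← ENNReal.ofReal_add (by positivity) (mul_nonneg hb.le (div_nonneg (by positivity)
      (by linarith))), mul_div_assoc', mul_div_assoc', hAa, hAb]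
  congr 1
  field_simp
  ring

section WeakType

variable {α : Type*} [MeasurableSpace α] {μ : Measure α}

lemma exists_measurable_le_abs_lintegral_rpow_eq (ν : Measure α) (g : α → ℝ) {δ : ℝ}
    (hδ : 0 < δ) :
    ∃ h : α → ℝ, Measurable h ∧ (∀ z, 0 ≤ h z) ∧ (∀ z, h z ≤ |g z|) ∧
      ∫⁻ z, ENNReal.ofReal (|g z| ^ δ) ∂ν = ∫⁻ z, ENNReal.ofReal (h z ^ δ) ∂ν := by
  obtain ⟨G, hGm, hGle, hGeq⟩ :=
    exists_measurable_le_lintegral_eq ν fun z => ENNReal.ofReal (|g z| ^ δ)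
  have hG : ∀ z, ((G z).toReal ^ (1 / δ)) ^ δ = (G z).toReal := fun z => by
    rw [← Real.rpow_mul ENNReal.toReal_nonneg, one_div_mul_cancel hδ.ne', Real.rpow_one]
  refine ⟨fun z => (G z).toReal ^ (1 / δ), (ENNReal.measurable_toReal.comp hGm).pow_const _,
    fun z => by positivity, fun z => ?_, ?_⟩
  · calc (G z).toReal ^ (1 / δ) ≤ (|g z| ^ δ) ^ (1 / δ) := by
          gcongr
          exact ENNReal.toReal_le_of_le_ofReal (by positivity) (hGle z)
      _ = |g z| := by
          rw [← Real.rpow_mul (abs_nonneg _), mul_one_div_cancel hδ.ne', Real.rpow_one]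
  · rw [hGeq]
    congr 1 with z
    rw [hG, ENNReal.ofReal_toReal ((hGle z).trans_lt ENNReal.ofReal_lt_top).ne]

lemma lintegral_rpow_le_of_meas_lt_le_min {ν : Measure α} {h : α → ℝ} (hhm : Measurable h)
    (hh0 : ∀ z, 0 ≤ h z) {a b δ s : ℝ} (ha : 0 < a) (hb : 0 ≤ b) (hδ : 0 < δ) (hδs : δ < s)
    (hdist : ∀ t : ℝ, 0 < t → ν {z | t < h z} ≤ ENNReal.ofReal (min a (b * t ^ (-s)))) :
    ∫⁻ z, ENNReal.ofReal (h z ^ δ) ∂ν ≤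
      ENNReal.ofReal (s / (s - δ) * a ^ (1 - δ / s) * b ^ (δ / s)) := by
  rw [lintegral_rpow_eq_lintegral_meas_lt_mul ν (ae_of_all _ hh0) hhm.aemeasurable hδ]
  calc ENNReal.ofReal δ * ∫⁻ t in Ioi 0, ν {z | t < h z} * ENNReal.ofReal (t ^ (δ - 1))
      ≤ ENNReal.ofReal δ *
          ∫⁻ t in Ioi 0, ENNReal.ofReal (min a (b * t ^ (-s)) * t ^ (δ - 1)) := by
        refine mul_le_mul_right (setLIntegral_mono' measurableSet_Ioi fun t ht => ?_) _
        have ht : 0 < t := ht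
        rw [ENNReal.ofReal_mul (le_min ha.le (by positivity))]
        exact mul_le_mul_left (hdist t ht) _
    _ ≤ ENNReal.ofReal δ *
          ENNReal.ofReal (s / (δ * (s - δ)) * a ^ (1 - δ / s) * b ^ (δ / s)) := by
        gcongr
        exact lintegral_Ioi_zero_min_mul_rpow_le ha hb hδ hδs
    _ = _ := by
        rw [← ENNReal.ofReal_mul hδ.le]
        congr 1
        field_simp

/-- Kolmogorov's inequality. -/
theorem setLIntegral_abs_rpow_le_of_distribution_le {g : α → ℝ} {B : Set α} {δ s : ℝ}
    {N : ℝ≥0∞} (hδ : 0 < δ) (hδs : δ < s) (hBT : μ B ≠ ⊤)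
    (hN : ∀ t : ℝ, 0 < t → ENNReal.ofReal t * μ {y | t < |g y|} ^ (1 / s) ≤ N) :
    ∫⁻ z in B, ENNReal.ofReal (|g z| ^ δ) ∂μ ≤
      ENNReal.ofReal (s / (s - δ)) * N ^ δ * μ B ^ (1 - δ / s) := by
  have hs : 0 < s := hδ.trans hδs
  rcases eq_or_ne (μ B) 0 with hB0 | hB0
  · simp [Measure.restrict_eq_zero.2 hB0]
  rcases eq_or_ne N ⊤ with rfl | hNT
  · have : ENNReal.ofReal (s / (s - δ)) ≠ 0 := by
      rw [Ne, ENNReal.ofReal_eq_zero, not_le]; exact div_pos hs (by linarith)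
    simp [ENNReal.top_rpow_of_pos hδ, ENNReal.mul_top this,
      ENNReal.top_mul (ENNReal.rpow_pos (pos_iff_ne_zero.2 hB0) hBT).ne']
  -- the layer-cake formula needs measurability, which `g` lacks: pass to a measurable minorant
  obtain ⟨h, hhm, hh0, hhg, hgh⟩ := exists_measurable_le_abs_lintegral_rpow_eq (μ.restrict B) g hδ
  obtain ⟨n, hn, rfl⟩ : ∃ n : ℝ, 0 ≤ n ∧ N = ENNReal.ofReal n :=
    ⟨N.toReal, ENNReal.toReal_nonneg, (ENNReal.ofReal_toReal hNT).symm⟩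
  obtain ⟨M, hM, hμB⟩ : ∃ M : ℝ, 0 < M ∧ μ B = ENNReal.ofReal M :=
    ⟨(μ B).toReal, ENNReal.toReal_pos hB0 hBT, (ENNReal.ofReal_toReal hBT).symm⟩
  have hdist : ∀ t : ℝ, 0 < t →
      μ.restrict B {z | t < h z} ≤ ENNReal.ofReal (min M (n ^ s * t ^ (-s))) := by
    intro t ht
    rw [ENNReal.ofReal_min, ← hμB, ENNReal.ofReal_mul (by positivity),
      ← ENNReal.ofReal_rpow_of_nonneg hn hs.le, ← ENNReal.ofReal_rpow_of_pos ht]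
    refine le_min ((measure_mono (subset_univ _)).trans_eq (Measure.restrict_apply_univ B)) ?_
    calc μ.restrict B {z | t < h z} ≤ μ {y | t < |g y|} :=
          (Measure.restrict_apply_le _ _).trans (measure_mono fun z hz => hz.trans_le (hhg z))
      _ ≤ ENNReal.ofReal n ^ s * ENNReal.ofReal t ^ (-s) :=
          ENNReal.le_rpow_mul_rpow_neg_of_mul_rpow_le hs (by simpa using ht)
            ENNReal.ofReal_ne_top (hN t ht)
  rw [hgh]
  refine (lintegral_rpow_le_of_meas_lt_le_min hhm hh0 hM (by positivity) hδ hδs hdist).trans_eq ?_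
  rw [hμB, ENNReal.ofReal_rpow_of_nonneg hn hδ.le,
    ENNReal.ofReal_rpow_of_nonneg hM.le (by rw [sub_nonneg, div_le_one hs]; exact hδs.le),
    ← ENNReal.ofReal_mul (by positivity), ← ENNReal.ofReal_mul (by positivity),
    ← Real.rpow_mul hn, mul_div_cancel₀ _ hs.ne', mul_right_comm]

lemma ofReal_mul_measure_rpow_le_weakLpNormW (g : α → ℝ) (s : ℝ) {t : ℝ} (ht : 0 < t) :
    ENNReal.ofReal t * μ {y | t < |g y|} ^ (1 / s) ≤ weakLpNormW μ s (fun _ => 1) g := by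
  simp only [weakLpNormW, ENNReal.ofReal_one, setLIntegral_one]
  exact le_iSup₂ (f := fun t (_ : 0 < t) => ENNReal.ofReal t * μ {y | t < |g y|} ^ (1 / s)) t ht

theorem setAverage_rpow_le_weakLpNormW (g : α → ℝ) {B : Set α} {δ s : ℝ} (hδ : 0 < δ)
    (hδs : δ < s) (hB0 : μ B ≠ 0) (hBT : μ B ≠ ⊤) :
    ((μ B)⁻¹ * ∫⁻ z in B, ENNReal.ofReal (|g z| ^ δ) ∂μ) ^ (1 / δ) ≤
      ENNReal.ofReal (s / (s - δ)) ^ (1 / δ) * weakLpNormW μ s (fun _ => 1) g *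
        μ B ^ (-(1 / s)) := by
  set N := weakLpNormW μ s (fun _ => 1) g
  calc ((μ B)⁻¹ * ∫⁻ z in B, ENNReal.ofReal (|g z| ^ δ) ∂μ) ^ (1 / δ)
      ≤ ((μ B)⁻¹ * (ENNReal.ofReal (s / (s - δ)) * N ^ δ * μ B ^ (1 - δ / s))) ^ (1 / δ) := by
        gcongr
        exact setLIntegral_abs_rpow_le_of_distribution_le hδ hδs hBT
          fun t ht => ofReal_mul_measure_rpow_le_weakLpNormW g s ht
    _ = (ENNReal.ofReal (s / (s - δ)) * N ^ δ * μ B ^ (-(1 / s) * δ)) ^ (1 / δ) := by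
        rw [← ENNReal.rpow_neg_one, mul_left_comm, ← ENNReal.rpow_add _ _ hB0 hBT]
        ring_nf
    _ = _ := by
        rw [ENNReal.mul_rpow_of_nonneg _ _ (by positivity),
          ENNReal.mul_rpow_of_nonneg _ _ (by positivity), ← ENNReal.rpow_mul,
          ← ENNReal.rpow_mul, mul_one_div_cancel hδ.ne', mul_assoc (-(1 / s)),
          mul_one_div_cancel hδ.ne', mul_one, ENNReal.rpow_one]

lemma lpNormW_one_eq_eLpNorm (f : α → ℝ) {p : ℝ} (hp : 0 < p) (ν : Measure α) :
    lpNormW ν p (fun _ => 1) f = eLpNorm f (ENNReal.ofReal p) ν := by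
  rw [eLpNorm_eq_lintegral_rpow_enorm_toReal (by simpa using hp) ENNReal.ofReal_ne_top,
    ENNReal.toReal_ofReal hp.le, lpNormW]
  simp_rw [mul_one, Real.enorm_eq_ofReal_abs, ENNReal.ofReal_rpow_of_nonneg (abs_nonneg _) hp.le]

lemma lpNormW_one_indicator_le {f : α → ℝ} (hf : Measurable f) {B : Set α} (hB : MeasurableSet B)
    (hB0 : μ B ≠ 0) (hBT : μ B ≠ ⊤) {r p : ℝ} (hr : 0 < r) (hrp : r ≤ p) :
    lpNormW μ r (fun _ => 1) (B.indicator f) ≤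
      μ B ^ (1 / r) * ((μ B)⁻¹ * ∫⁻ y in B, ENNReal.ofReal (|f y| ^ p) ∂μ) ^ (1 / p) := by
  have hp : 0 < p := hr.trans_le hrp
  calc lpNormW μ r (fun _ => 1) (B.indicator f)
      = eLpNorm f (ENNReal.ofReal r) (μ.restrict B) := by
        rw [lpNormW_one_eq_eLpNorm _ hr, eLpNorm_indicator_eq_eLpNorm_restrict hB]
    _ ≤ eLpNorm f (ENNReal.ofReal p) (μ.restrict B) * μ B ^ (1 / r - 1 / p) := by
        simpa [ENNReal.toReal_ofReal hr.le, ENNReal.toReal_ofReal hp.le] using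
          eLpNorm_le_eLpNorm_mul_rpow_measure_univ (μ := μ.restrict B)
            (ENNReal.ofReal_le_ofReal hrp) hf.aestronglyMeasurable
    _ = (∫⁻ y in B, ENNReal.ofReal (|f y| ^ p) ∂μ) ^ (1 / p) * μ B ^ (1 / r - 1 / p) := by
        rw [← lpNormW_one_eq_eLpNorm _ hp, lpNormW]
        simp_rw [mul_one]
    _ = _ := by
        rw [ENNReal.mul_rpow_of_nonneg _ _ (by positivity), ← mul_assoc, ENNReal.inv_rpow,
          ← ENNReal.rpow_neg, ← ENNReal.rpow_add _ _ hB0 hBT, ← sub_eq_add_neg, mul_comm]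

lemma prod_lpNormW_one_indicator_le {ι : Type*} [Fintype ι] {f : ι → α → ℝ}
    (hf : ∀ j, Measurable (f j)) {B : Set α} (hB : MeasurableSet B) (hB0 : μ B ≠ 0)
    (hBT : μ B ≠ ⊤) {r : ι → ℝ} {p : ℝ} (hp : 0 < p) (hr : ∀ j, 0 < r j) (hrp : ∀ j, r j ≤ p) :
    ∏ j, lpNormW μ (r j) (fun _ => 1) (B.indicator (f j)) ≤
      μ B ^ (∑ j, 1 / r j) *
        (∏ j, (μ B)⁻¹ * ∫⁻ y in B, ENNReal.ofReal (|f j y| ^ p) ∂μ) ^ (1 / p) := by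
  calc ∏ j, lpNormW μ (r j) (fun _ => 1) (B.indicator (f j))
      ≤ ∏ j, μ B ^ (1 / r j) *
          ((μ B)⁻¹ * ∫⁻ y in B, ENNReal.ofReal (|f j y| ^ p) ∂μ) ^ (1 / p) :=
        Finset.prod_le_prod' fun j _ => lpNormW_one_indicator_le (hf j) hB hB0 hBT (hr j) (hrp j)
    _ = _ := by
        rw [Finset.prod_mul_distrib, ENNReal.rpow_sum hB0 hBT,
          ENNReal.prod_rpow_of_nonneg (by positivity)]

end WeakType

section MetricMeasure

variable {X : Type*} [MetricSpace X] [MeasurableSpace X] {μ : Measure X}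

lemma prod_setAverage_ball_le_multiMaximal {m : ℕ} (F : Fin m → X → ℝ) {c x : X} {R : ℝ}
    (hR : 0 < R) (hx : x ∈ ball c R) :
    ∏ j, ((μ (ball c R))⁻¹ * ∫⁻ y in ball c R, ENNReal.ofReal |F j y| ∂μ) ≤
      multiMaximal μ F x :=
  le_iSup_of_le c <| le_iSup_of_le R <| le_iSup_of_le hR <| le_iSup_of_le hx le_rfl

lemma prod_lpNormW_one_indicator_ball_le [OpensMeasurableSpace X] {m : ℕ}
    {f : Fin m → X → ℝ} (hf : ∀ j, Measurable (f j)) {c x : X} {R : ℝ} (hR : 0 < R)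
    (hx : x ∈ ball c R) (hB0 : μ (ball c R) ≠ 0) (hBT : μ (ball c R) ≠ ⊤) {r : Fin m → ℝ}
    {p : ℝ} (hp : 0 < p) (hr : ∀ j, 0 < r j) (hrp : ∀ j, r j ≤ p) :
    ∏ j, lpNormW μ (r j) (fun _ => 1) ((ball c R).indicator (f j)) ≤
      μ (ball c R) ^ (∑ j, 1 / r j) * multiMaximalPow μ p f x := by
  refine (prod_lpNormW_one_indicator_le hf measurableSet_ball hB0 hBT hp hr hrp).trans ?_
  rw [multiMaximalPow]
  gcongr
  simpa only [abs_of_nonneg (Real.rpow_nonneg (abs_nonneg _) _)] using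
    prod_setAverage_ball_le_multiMaximal (μ := μ) (fun j y => |f j y| ^ p) hR hx

end MetricMeasure

lemma measure_ball_two_pow_mul_le_s17 {X : Type*} [PseudoMetricSpace X] [MeasurableSpace X]
    {μ : Measure X} {C : ℝ≥0∞} (hC : ∀ x r, 0 < r → μ (ball x (2 * r)) ≤ C * μ (ball x r))
    (x : X) {r : ℝ} (hr : 0 < r) (k : ℕ) : μ (ball x (2 ^ k * r)) ≤ C ^ k * μ (ball x r) := by
  induction k with
  | zero => simp
  | succ k ih =>
    calc μ (ball x (2 ^ (k + 1) * r)) = μ (ball x (2 * (2 ^ k * r))) := by ring_nf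
      _ ≤ C * μ (ball x (2 ^ k * r)) := hC x _ (by positivity)
      _ ≤ C ^ (k + 1) * μ (ball x r) := by rw [pow_succ', mul_assoc]; gcongr

lemma IsRDSpace.exists_measure_ball_thirtytwo_mul_le {X : Type*} [MetricSpace X]
    [MeasurableSpace X] {μ : Measure X} {κ n : ℝ} (hRD : IsRDSpace μ κ n) :
    ∃ D : ℝ, 0 < D ∧ ∀ (c : X) (R : ℝ), 0 < R →
      μ (ball c (32 * R)) ≤ ENNReal.ofReal D * μ (ball c R) := by
  obtain ⟨C₁, hC₁, -, hdbl⟩ := hRD.doubling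
  refine ⟨C₁ ^ 5, by positivity, fun c R hR => ?_⟩
  simpa [ENNReal.ofReal_pow (zero_le_one.trans hC₁), show (2 : ℝ) ^ 5 = 32 by norm_num] using
    measure_ball_two_pow_mul_le_s17 hdbl c hR 5

theorem local_estimate_weak_r_general
    {X : Type*} [MetricSpace X] [MeasurableSpace X] [BorelSpace X]
    (μ : Measure X) (κ n : ℝ) (hRD : IsRDSpace μ κ n)
    (m : ℕ) (r : Fin m → ℝ) (hr : ∀ j, 1 ≤ r j)
    (p₀' : ℝ) (hp₀' : ∀ j, r j ≤ p₀')
    (T : (Fin m → X → ℝ) → X → ℝ)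
    (hT : ∃ C : ℝ, 0 < C ∧ ∀ f : Fin m → X → ℝ, (∀ j, Measurable (f j)) →
      weakLpNormW μ (∑ j, 1 / r j)⁻¹ (fun _ => 1) (T f) ≤
        ENNReal.ofReal C * ∏ j, lpNormW μ (r j) (fun _ => 1) (f j))
    (δ : ℝ) (hδ0 : 0 < δ) (hδ : δ < (∑ j, 1 / r j)⁻¹) :
    ∃ C : ℝ, 0 < C ∧ ∀ (c : X) (rad : ℝ), 0 < rad → ∀ x ∈ ball c rad,
      ∀ f : Fin m → X → ℝ,
        (∀ j, Measurable (f j)) →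
        (∀ j, ∃ M : ℝ, ∀ y, |f j y| ≤ M) →
        (∀ j, IsBounded (Function.support (f j))) →
        ((μ (ball c rad))⁻¹ *
            ∫⁻ z in ball c rad,
              ENNReal.ofReal
                (|T (fun j => (ball c (32 * rad)).indicator (f j)) z| ^ δ) ∂μ) ^ (1 / δ)
          ≤ ENNReal.ofReal C * multiMaximalPow μ p₀' f x := by
  obtain ⟨CT, hCT, hTb⟩ := hT
  obtain ⟨D, hD, hdbl⟩ := hRD.exists_measure_ball_thirtytwo_mul_le
  set s := (∑ j, 1 / r j)⁻¹ with hs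
  have hs0 : 0 < s := hδ0.trans hδ
  have hsδ : 0 < s - δ := by linarith
  have hr0 : ∀ j, 0 < r j := fun j => one_pos.trans_le (hr j)
  obtain ⟨j₀, -, -⟩ := Finset.exists_ne_zero_of_sum_ne_zero (inv_pos.mp hs0).ne'
  refine ⟨(s / (s - δ)) ^ (1 / δ) * CT * D ^ (1 / s), by positivity, ?_⟩
  intro c R hR x hx f hfm _ _
  have hR32 : 0 < 32 * R := by positivity
  have hB0 := (hRD.ball_pos c R hR).ne'
  have hBT := (hRD.ball_lt_top c R hR).ne
  have hN : weakLpNormW μ s (fun _ => 1) (T fun j => (ball c (32 * R)).indicator (f j)) ≤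
      ENNReal.ofReal CT *
        ((ENNReal.ofReal D * μ (ball c R)) ^ (1 / s) * multiMaximalPow μ p₀' f x) := by
    refine (hTb _ fun j => (hfm j).indicator measurableSet_ball).trans ?_
    gcongr
    refine (prod_lpNormW_one_indicator_ball_le hfm hR32 (ball_subset_ball (by linarith) hx)
      (hRD.ball_pos c _ hR32).ne' (hRD.ball_lt_top c _ hR32).ne
      ((hr0 j₀).trans_le (hp₀' j₀)) hr0 hp₀').trans ?_
    rw [one_div s, hs, inv_inv]
    gcongr
    · exact (inv_pos.mp hs0).le
    · exact hdbl c R hR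
  refine ((setAverage_rpow_le_weakLpNormW _ hδ0 hδ hB0 hBT).trans
    (mul_le_mul_left (mul_le_mul_right hN _) _)).trans_eq ?_
  rw [ENNReal.mul_rpow_of_nonneg _ _ (by positivity),
    show ∀ a b c d e f : ℝ≥0∞, a * (b * (c * d * e)) * f = a * b * c * e * (d * f) by
      intros; ring,
    ← ENNReal.rpow_add _ _ hB0 hBT, add_neg_cancel, ENNReal.rpow_zero, mul_one,
    ENNReal.ofReal_mul (by positivity), ENNReal.ofReal_mul (by positivity),
    ENNReal.ofReal_rpow_of_nonneg (by positivity) (by positivity),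
    ENNReal.ofReal_rpow_of_nonneg (by positivity) (by positivity)]

/-- Local estimate for the "good" part (case 1 of the proof of Theorem 2.1):
if the `m`-linear operator `T` is bounded from `L^{r₁}×⋯×L^{r_m}` to `L^{r,∞}`,
`p₀' ≥ max r_j` and `0 < δ < r`, then for any ball `B` and `x ∈ B`,
`(μ(B)⁻¹ ∫_B |T(f₁χ_{32B},…,f_mχ_{32B})|^δ dμ)^{1/δ} ≤ C 𝓜_{p₀'}(f⃗)(x)`. -/
theorem local_estimate_weak_r
    {X : Type*} [MetricSpace X] [MeasurableSpace X] [BorelSpace X]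
    (μ : Measure X) (κ n : ℝ) (hRD : IsRDSpace μ κ n)
    (m : ℕ) (hm : 0 < m) (r : Fin m → ℝ) (hr : ∀ j, 1 ≤ r j)
    (p₀' : ℝ) (hp₀' : ∀ j, r j ≤ p₀')
    (T : (Fin m → X → ℝ) → X → ℝ)
    (hT : ∃ C : ℝ, 0 < C ∧ ∀ f : Fin m → X → ℝ, (∀ j, Measurable (f j)) →
      weakLpNormW μ (∑ j, 1 / r j)⁻¹ (fun _ => 1) (T f) ≤
        ENNReal.ofReal C * ∏ j, lpNormW μ (r j) (fun _ => 1) (f j))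
    (δ : ℝ) (hδ0 : 0 < δ) (hδ : δ < (∑ j, 1 / r j)⁻¹) :
    ∃ C : ℝ, 0 < C ∧ ∀ (c : X) (rad : ℝ), 0 < rad → ∀ x ∈ ball c rad,
      ∀ f : Fin m → X → ℝ,
        (∀ j, Measurable (f j)) →
        (∀ j, ∃ M : ℝ, ∀ y, |f j y| ≤ M) →
        (∀ j, IsBounded (Function.support (f j))) →
        ((μ (ball c rad))⁻¹ *
            ∫⁻ z in ball c rad,
              ENNReal.ofReal
                (|T (fun j => (ball c (32 * rad)).indicator (f j)) z| ^ δ) ∂μ) ^ (1 / δ)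
          ≤ ENNReal.ofReal C * multiMaximalPow μ p₀' f x :=
  local_estimate_weak_r_general μ κ n hRD m r hr p₀' hp₀' T hT δ hδ0 hδ
end
end
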